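/- arXiv:1107.1859 — 7 statements merged into one kernel-verified Lean document; each statement's English description precedes it below -/
import Mathlib

section
/- Let G be a subgroup of SU(J) such that there is no G-stable 1-dimensional complex subspace of ℂ³. Then every G-stable real subspace W of ℂ³ has real dimension 0, 3, or 6; that is, there is no G-stable real subspace of real dimension 1, 2, 4, or 5. -/
open Matrix Polynomial

/-- The matrix `matJ` with rows `(1,0,0), (0,0,1), (0,1,0)`. -/
noncomputable def matJ : Matrix (Fin 3) (Fin 3) ℂ := !![1,0,0; 0,0,1; 0,1,0]

/-- The Hermitian form `⟨x,y⟩ = x₀ conj y₀ + x₁ conj y₂ + x₂ conj y₁` on `ℂ³`. -/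
noncomputable def herm (x y : Fin 3 → ℂ) : ℂ :=
  x 0 * star (y 0) + x 1 * star (y 2) + x 2 * star (y 1)

/-- Membership in `SU(matJ)`: determinant one and `gᴴ matJ g = matJ`. -/
def InSUJ (g : Matrix (Fin 3) (Fin 3) ℂ) : Prop :=
  g.det = 1 ∧ gᴴ * matJ * g = matJ

/-- `g` is loxodromic: it has an eigenvalue (root of its characteristic polynomial)
of modulus greater than `1`. -/
def Loxodromic (g : Matrix (Fin 3) (Fin 3) ℂ) : Prop :=
  ∃ μ : ℂ, g.charpoly.IsRoot μ ∧ 1 < ‖μ‖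

/-- `G` is a subgroup of `SU(matJ)`. -/
def IsSubgroupOfSUJ (G : Set (Matrix (Fin 3) (Fin 3) ℂ)) : Prop :=
  (∀ g ∈ G, InSUJ g) ∧ (1 : Matrix (Fin 3) (Fin 3) ℂ) ∈ G ∧
    (∀ g ∈ G, ∀ h ∈ G, g * h ∈ G) ∧ (∀ g ∈ G, g⁻¹ ∈ G)

/-- The trace condition: the trace of every loxodromic element of `G` lies in `ℝδ`
for some cubic root of unity `δ`. -/
def TraceCond (G : Set (Matrix (Fin 3) (Fin 3) ℂ)) : Prop :=
  ∀ g ∈ G, Loxodromic g → ∃ δ : ℂ, δ ^ 3 = 1 ∧ ∃ r : ℝ, g.trace = (r : ℂ) * δ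

/-- A real subspace `W ⊆ ℂ³` is `G`-stable. -/
def StableR (G : Set (Matrix (Fin 3) (Fin 3) ℂ)) (W : Submodule ℝ (Fin 3 → ℂ)) : Prop :=
  ∀ g ∈ G, ∀ w ∈ W, g.mulVec w ∈ W

/-- A complex subspace `W ⊆ ℂ³` is `G`-stable. -/
def StableC (G : Set (Matrix (Fin 3) (Fin 3) ℂ)) (W : Submodule ℂ (Fin 3 → ℂ)) : Prop :=
  ∀ g ∈ G, ∀ w ∈ W, g.mulVec w ∈ W

/-- A real subspace `W ⊆ ℂ³` is totally real when the form is real on it. -/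
def TotallyReal (W : Submodule ℝ (Fin 3 → ℂ)) : Prop :=
  ∀ w ∈ W, ∀ w' ∈ W, (herm w w').im = 0

/-!
For a `G`-stable real subspace `W`, both its complex span `W + iW` and the largest complex
subspace `W ∩ iW` it contains are `G`-stable, and `dim_ℝ (W + iW) + dim_ℝ (W ∩ iW) = 2 dim_ℝ W`
makes `dim_ℝ W` the sum of their complex dimensions. A `G`-stable complex subspace has complex
dimension `0` or `3`: lines are excluded by hypothesis, and the orthogonal of a stable plane for
the nondegenerate invariant form is a stable line. So `dim_ℝ W` is `0 + 0`, `3 + 0` or `3 + 3`.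
-/

open scoped Pointwise ComplexOrder

section ComplexSubspaces

variable {V : Type*} [AddCommGroup V] [Module ℂ V]

open Complex

lemma complex_smul_mem_of_I_smul_mem {U : Submodule ℝ V} (hU : ∀ x ∈ U, I • x ∈ U)
    (c : ℂ) {x : V} (hx : x ∈ U) : c • x ∈ U := by
  have hc : c • x = c.re • x + c.im • (I • x) := by
    conv_lhs => rw [← re_add_im c]
    rw [add_smul, mul_smul, Complex.coe_smul, Complex.coe_smul]
  rw [hc]
  exact U.add_mem (U.smul_mem _ hx) (U.smul_mem _ (hU x hx))

lemma I_smul_I_smul (x : V) : I • I • x = -x := by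
  rw [smul_smul, I_mul_I, neg_one_smul]

lemma mem_I_smul_iff {W : Submodule ℝ V} {x : V} : x ∈ I • W ↔ -(I • x) ∈ W := by
  constructor
  · rintro ⟨w, hw, rfl⟩
    simpa [I_smul_I_smul] using hw
  · intro h
    exact ⟨_, h, by simp [I_smul_I_smul]⟩

/-- The largest complex subspace contained in a real subspace. -/
def complexCore (W : Submodule ℝ V) : Submodule ℂ V where
  carrier := {x | ∀ c : ℂ, c • x ∈ W}
  add_mem' hx hy c := by rw [smul_add]; exact W.add_mem (hx c) (hy c)
  zero_mem' c := by rw [smul_zero]; exact W.zero_mem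
  smul_mem' c x hx d := by rw [smul_smul]; exact hx _

lemma restrictScalars_complexCore (W : Submodule ℝ V) :
    (complexCore W).restrictScalars ℝ = W ⊓ I • W := by
  ext x
  refine ⟨fun hx => ⟨by simpa using hx 1, mem_I_smul_iff.2 (by simpa using hx (-I))⟩, ?_⟩
  intro hx c
  refine (complex_smul_mem_of_I_smul_mem (U := W ⊓ I • W) ?_ c hx).1
  rintro y ⟨hyW, hyI⟩
  exact ⟨by simpa using mem_I_smul_iff.1 hyI, Submodule.smul_mem_pointwise_smul _ _ _ hyW⟩

lemma restrictScalars_span (W : Submodule ℝ V) :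
    (Submodule.span ℂ (W : Set V)).restrictScalars ℝ = W ⊔ I • W := by
  refine le_antisymm ?_ (sup_le Submodule.subset_span ?_)
  · intro x hx
    induction hx using Submodule.span_induction with
    | mem x hx => exact Submodule.mem_sup_left hx
    | zero => exact Submodule.zero_mem _
    | add x y _ _ hx hy => exact Submodule.add_mem _ hx hy
    | smul c x _ hx =>
      refine complex_smul_mem_of_I_smul_mem (fun y hy => ?_) c hx
      obtain ⟨u, hu, v, hv, rfl⟩ := Submodule.mem_sup.1 hy
      obtain ⟨w, hw, rfl⟩ := hv
      refine Submodule.mem_sup.2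
        ⟨-w, W.neg_mem hw, I • u, Submodule.smul_mem_pointwise_smul _ _ _ hu, ?_⟩
      simp [smul_add, I_smul_I_smul, add_comm]
  · rintro _ ⟨w, hw, rfl⟩
    exact Submodule.smul_mem _ I (Submodule.subset_span hw)

lemma finrank_restrictScalars_real (M : Submodule ℂ V) :
    Module.finrank ℝ (M.restrictScalars ℝ) = 2 * Module.finrank ℂ M :=
  finrank_real_of_complex M

lemma finrank_real_eq_finrank_span_add_finrank_complexCore [FiniteDimensional ℂ V]
    (W : Submodule ℝ V) :
    Module.finrank ℝ W =
      Module.finrank ℂ (Submodule.span ℂ (W : Set V)) + Module.finrank ℂ (complexCore W) := by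
  have hI : Module.finrank ℝ ↥(I • W) = Module.finrank ℝ W :=
    LinearEquiv.finrank_map_eq (DistribMulAction.toLinearEquiv ℝ V (Units.mk0 I I_ne_zero)) W
  have h := Submodule.finrank_sup_add_finrank_inf_eq W (I • W)
  rw [← restrictScalars_span, ← restrictScalars_complexCore, finrank_restrictScalars_real,
    finrank_restrictScalars_real, hI] at h
  omega

end ComplexSubspaces

section FormOrthogonal

variable {K : Type*} [Field K] {n : Type*} [Fintype n]

lemma exists_range_mulVecLin_eq (P : Submodule K (n → K)) :
    ∃ B : Matrix n (Fin (Module.finrank K P)) K, LinearMap.range B.mulVecLin = P := by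
  refine ⟨LinearMap.toMatrix' (P.subtype ∘ₗ (Module.finBasis K P).equivFun.symm.toLinearMap), ?_⟩
  rw [← Matrix.toLin'_apply', Matrix.toLin'_toMatrix',
    LinearMap.range_comp_of_range_eq_top _ (LinearEquiv.range _), Submodule.range_subtype]

variable [StarRing K]

/-- For `J = matJ`, `star y ⬝ᵥ J *ᵥ x` is the Hermitian form `herm x y`. -/
def formOrthogonal (J : Matrix n n K) (P : Submodule K (n → K)) : Submodule K (n → K) where
  carrier := {x | ∀ y ∈ P, star y ⬝ᵥ J *ᵥ x = 0}
  add_mem' hx hx' y hy := by rw [mulVec_add, dotProduct_add, hx y hy, hx' y hy, add_zero]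
  zero_mem' y _ := by rw [mulVec_zero, dotProduct_zero]
  smul_mem' c x hx y hy := by rw [mulVec_smul, dotProduct_smul, hx y hy, smul_zero]

lemma star_mulVec_dotProduct_mulVec_mulVec {J g : Matrix n n K} (hg : gᴴ * J * g = J)
    (x y : n → K) : star (g *ᵥ y) ⬝ᵥ J *ᵥ g *ᵥ x = star y ⬝ᵥ J *ᵥ x := by
  rw [star_mulVec, ← dotProduct_mulVec, mulVec_mulVec, mulVec_mulVec, hg]

lemma mulVec_mem_formOrthogonal [DecidableEq n] {J g : Matrix n n K} (hg : gᴴ * J * g = J)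
    (hdet : IsUnit g.det) {P : Submodule K (n → K)} (hP : ∀ y ∈ P, g⁻¹ *ᵥ y ∈ P) {x : n → K}
    (hx : x ∈ formOrthogonal J P) : g *ᵥ x ∈ formOrthogonal J P := by
  intro y hy
  have hy' : g *ᵥ g⁻¹ *ᵥ y = y := by rw [mulVec_mulVec, mul_nonsing_inv _ hdet, one_mulVec]
  rw [← hy', star_mulVec_dotProduct_mulVec_mulVec hg]
  exact hx _ (hP y hy)

lemma formOrthogonal_range_mulVecLin {m : Type*} [Fintype m] [DecidableEq m]
    (J : Matrix n n K) (B : Matrix n m K) :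
    formOrthogonal J (LinearMap.range B.mulVecLin) = LinearMap.ker (Bᴴ * J).mulVecLin := by
  ext x
  simp only [LinearMap.mem_ker, mulVecLin_apply]
  refine ⟨fun hx => ?_, ?_⟩
  · funext i
    have := hx (B *ᵥ Pi.single i 1) (LinearMap.mem_range_self B.mulVecLin _)
    rwa [star_mulVec, ← dotProduct_mulVec, mulVec_mulVec, Pi.star_single, star_one,
      single_one_dotProduct] at this
  · rintro hx _ ⟨z, rfl⟩
    rw [mulVecLin_apply, star_mulVec, ← dotProduct_mulVec, mulVec_mulVec, hx, dotProduct_zero]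

lemma finrank_add_finrank_formOrthogonal [PartialOrder K] [StarOrderedRing K] [DecidableEq n]
    {J : Matrix n n K} (hJ : IsUnit J.det) (P : Submodule K (n → K)) :
    Module.finrank K P + Module.finrank K (formOrthogonal J P) = Fintype.card n := by
  obtain ⟨B, hB⟩ := exists_range_mulVecLin_eq P
  have hrank : (Bᴴ * J).rank = Module.finrank K P := by
    rw [rank_mul_eq_left_of_isUnit_det J _ hJ, rank_conjTranspose, rank, hB]
  have h := LinearMap.finrank_range_add_finrank_ker (Bᴴ * J).mulVecLin
  rwa [← rank, hrank, ← formOrthogonal_range_mulVecLin, hB,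
    Module.finrank_fintype_fun_eq_card] at h

end FormOrthogonal

lemma isUnit_det_matJ : IsUnit matJ.det := by
  simp [matJ, det_fin_three]

section Stability

variable {G : Set (Matrix (Fin 3) (Fin 3) ℂ)}

lemma StableR.stableC_span {W : Submodule ℝ (Fin 3 → ℂ)} (hW : StableR G W) :
    StableC G (Submodule.span ℂ (W : Set (Fin 3 → ℂ))) := by
  intro g hg
  have hle : Submodule.span ℂ (W : Set (Fin 3 → ℂ)) ≤
      (Submodule.span ℂ (W : Set (Fin 3 → ℂ))).comap g.mulVecLin :=
    Submodule.span_le.2 fun w hw => Submodule.subset_span (hW g hg w hw)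
  exact fun w hw => hle hw

lemma StableR.stableC_complexCore {W : Submodule ℝ (Fin 3 → ℂ)} (hW : StableR G W) :
    StableC G (complexCore W) := by
  intro g hg w hw c
  rw [← mulVec_smul]
  exact hW g hg _ (hw c)

lemma StableC.formOrthogonal_matJ (hG : IsSubgroupOfSUJ G) {P : Submodule ℂ (Fin 3 → ℂ)}
    (hP : StableC G P) : StableC G (formOrthogonal matJ P) := by
  intro g hg x hx
  obtain ⟨hdet, hform⟩ := hG.1 g hg
  exact mulVec_mem_formOrthogonal hform (hdet ▸ isUnit_one) (hP _ (hG.2.2.2 g hg)) hx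

lemma finrank_eq_zero_or_three_of_stableC (hG : IsSubgroupOfSUJ G)
    (hNoLine : ¬ ∃ L : Submodule ℂ (Fin 3 → ℂ), Module.finrank ℂ L = 1 ∧ StableC G L)
    {M : Submodule ℂ (Fin 3 → ℂ)} (hM : StableC G M) :
    Module.finrank ℂ M = 0 ∨ Module.finrank ℂ M = 3 := by
  have hdim := finrank_add_finrank_formOrthogonal isUnit_det_matJ M
  rw [Fintype.card_fin] at hdim
  by_contra hM03
  obtain hline | hplane : Module.finrank ℂ M = 1 ∨ Module.finrank ℂ M = 2 := by omega
  · exact hNoLine ⟨M, hline, hM⟩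
  · exact hNoLine ⟨_, by omega, hM.formOrthogonal_matJ hG⟩

end Stability

theorem statement_8 (G : Set (Matrix (Fin 3) (Fin 3) ℂ))
    (hG : IsSubgroupOfSUJ G)
    (hNoLine : ¬ ∃ L : Submodule ℂ (Fin 3 → ℂ), Module.finrank ℂ L = 1 ∧ StableC G L) :
    ∀ W : Submodule ℝ (Fin 3 → ℂ), StableR G W →
      Module.finrank ℝ W = 0 ∨ Module.finrank ℝ W = 3 ∨ Module.finrank ℝ W = 6 := by
  intro W hW
  have hspan := finrank_eq_zero_or_three_of_stableC hG hNoLine hW.stableC_span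
  have hcore := finrank_eq_zero_or_three_of_stableC hG hNoLine hW.stableC_complexCore
  rw [finrank_real_eq_finrank_span_add_finrank_complexCore]
  omega
end

section
/- Let G be a subgroup of GL(3,ℂ) such that ℂ³, viewed as a 6-dimensional real vector space, has no G-stable real subspace other than 0 and ℂ³ itself. Then the real linear span of G inside the algebra of 3×3 complex matrices is the whole matrix algebra M₃(ℂ). -/
open Matrix Polynomial

/-!
Let `S` be the real algebra generated by `G`, so that `ℂⁿ` (`n` odd) is a simple `S`-module. By the
Jacobson density theorem `S` is everything once every `S`-linear endomorphism `d` of `ℂⁿ` is a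
complex scalar. Split `d` into its complex-linear and antilinear parts. The linear part has an
eigenvalue, so it is a scalar by Schur's lemma. The square of the antilinear part `e` is then a
scalar `μ`, which is real because `e` commutes with `e ∘ e`, and nonnegative because writing
`e v = P v̄` gives `P P̄ = μ`, hence `|det P|² = μⁿ`. Now `(e - √μ) ∘ (e + √μ) = 0`, so by Schur
`e = ±√μ`, which is complex linear as well as antilinear; hence `e = 0`.
-/

open Complex ComplexConjugate

section ComplexStructure

variable {V W : Type*} [AddCommGroup V] [Module ℂ V] [AddCommGroup W] [Module ℂ W]

lemma Complex.smul_eq_re_smul_add_im_smul_I_smul (z : ℂ) (v : V) :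
    z • v = z.re • v + z.im • (I • v) := by
  conv_lhs => rw [← re_add_im z]
  rw [add_smul, mul_smul, coe_smul, coe_smul]

lemma LinearMap.map_complex_smul_of_map_I_smul (f : V →ₗ[ℝ] W)
    (hf : ∀ v, f (I • v) = I • f v) (z : ℂ) (v : V) : f (z • v) = z • f v := by
  rw [z.smul_eq_re_smul_add_im_smul_I_smul, z.smul_eq_re_smul_add_im_smul_I_smul, map_add,
    map_smul, map_smul, hf]

lemma LinearMap.map_complex_smul_of_map_I_smul_eq_neg (f : V →ₗ[ℝ] W)
    (hf : ∀ v, f (I • v) = -(I • f v)) (z : ℂ) (v : V) : f (z • v) = conj z • f v := by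
  rw [z.smul_eq_re_smul_add_im_smul_I_smul, (conj z).smul_eq_re_smul_add_im_smul_I_smul,
    map_add, map_smul, map_smul, hf, conj_re, conj_im, smul_neg, neg_smul]

end ComplexStructure

theorem nonneg_of_antilinear_apply_apply_eq_smul {ι : Type*} [Fintype ι] [DecidableEq ι]
    (hι : Odd (Fintype.card ι)) (f : (ι → ℂ) →ₗ⋆[ℂ] (ι → ℂ)) {r : ℝ}
    (hf : ∀ v, f (f v) = (r : ℂ) • v) : 0 ≤ r := by
  set P := LinearMap.toMatrix' (f.comp (starLinearEquiv ℂ (A := ι → ℂ)).toLinearMap)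
  have hfP : ∀ v, f v = P *ᵥ star v := fun v => by
    rw [← toLin'_apply, toLin'_toMatrix']
    simp
  have hstar : ∀ w, star (P *ᵥ w) = P.map star *ᵥ star w := fun w =>
    funext ((starRingEnd ℂ).map_mulVec P w)
  have hPP : P * P.map star = (r : ℂ) • 1 := by
    refine ext_of_mulVec_single fun j => ?_
    rw [← mulVec_mulVec, ← star_star (Pi.single j 1 : ι → ℂ), ← hstar, ← hfP, ← hfP, hf,
      star_star, smul_mulVec, one_mulVec]
  have hdet : ((normSq P.det : ℝ) : ℂ) = ((r ^ Fintype.card ι : ℝ) : ℂ) := by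
    have hstar_det : (P.map star).det = conj P.det := ((starRingEnd ℂ).map_det P).symm
    have := congrArg det hPP
    rw [det_mul, det_smul, det_one, mul_one, hstar_det] at this
    rw [← mul_conj, this]
    norm_cast
  rw [← hι.pow_nonneg_iff, ← ofReal_inj.mp hdet]
  exact normSq_nonneg _

namespace Subalgebra

variable {ι : Type*} [Fintype ι] [DecidableEq ι] (S : Subalgebra ℝ (Matrix ι ι ℂ))

instance : IsScalarTower ℝ S (ι → ℂ) :=
  IsScalarTower.of_algebraMap_smul fun r v => by
    change algebraMap ℝ (Matrix ι ι ℂ) r *ᵥ v = r • v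
    rw [Algebra.algebraMap_eq_smul_one, smul_mulVec, one_mulVec]

variable {S} [IsSimpleModule S (ι → ℂ)]

theorem exists_eq_smul_of_map_I_smul (d : Module.End S (ι → ℂ))
    (hd : ∀ v, d (I • v) = I • d v) : ∃ c : ℂ, ∀ v, d v = c • v := by
  have := IsSimpleModule.nontrivial S (ι → ℂ)
  let dC : Module.End ℂ (ι → ℂ) :=
    { toFun := d
      map_add' := d.map_add
      map_smul' := (d.restrictScalars ℝ).map_complex_smul_of_map_I_smul hd }
  obtain ⟨c, hc⟩ := Module.End.exists_eigenvalue dC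
  obtain ⟨w, hw⟩ := hc.exists_hasEigenvector
  refine ⟨c, fun v => sub_eq_zero.mp ?_⟩
  have hker : (d - c • 1) w = 0 := by
    have h : d w = c • w := hw.apply_eq_smul
    simp [h]
  rcases (d - c • 1).injective_or_eq_zero with hinj | hzero
  · exact absurd (hinj (hker.trans (map_zero _).symm)) hw.2
  · simpa using LinearMap.congr_fun hzero v

theorem eq_zero_of_map_I_smul_eq_neg (hι : Odd (Fintype.card ι)) (e : Module.End S (ι → ℂ))
    (he : ∀ v, e (I • v) = -(I • e v)) : e = 0 := by
  have := IsSimpleModule.nontrivial S (ι → ℂ)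
  have he' : ∀ (z : ℂ) v, e (z • v) = conj z • e v :=
    (e.restrictScalars ℝ).map_complex_smul_of_map_I_smul_eq_neg he
  obtain ⟨μ, hμ⟩ := exists_eq_smul_of_map_I_smul (e * e) fun v => by
    simp only [Module.End.mul_apply, he, map_neg, neg_neg]
  by_contra he0
  have hinj := e.injective_or_eq_zero.resolve_right he0
  obtain ⟨v, hv⟩ := exists_ne (0 : ι → ℂ)
  have hev : e v ≠ 0 := fun h => hv (hinj (h.trans (map_zero e).symm))
  have hμ_conj : conj μ = μ := by
    refine smul_left_injective ℂ hev ?_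
    change conj μ • e v = μ • e v
    rw [← he', ← hμ v, ← hμ (e v)]
    rfl
  set r := μ.re
  have hμr : μ = r := (conj_eq_iff_re.mp hμ_conj).symm
  have hr : 0 ≤ r := nonneg_of_antilinear_apply_apply_eq_smul hι
    { toFun := e, map_add' := e.map_add, map_smul' := he' } fun w => by
      simp [← hμr, ← hμ w]
  set s := √r
  obtain ⟨t, ht⟩ : ∃ t : ℂ, ∀ w, e w = t • w := by
    rcases (e + (s : ℂ) • 1).injective_or_eq_zero with hinj' | hzero
    · refine ⟨s, fun w => sub_eq_zero.mp (hinj' ?_)⟩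
      have hss : (s : ℂ) * s = r := by exact_mod_cast Real.mul_self_sqrt hr
      simp only [LinearMap.add_apply, LinearMap.smul_apply, Module.End.one_apply, map_sub,
        map_zero]
      rw [← Module.End.mul_apply, hμ, hμr, he', conj_ofReal, smul_smul, hss]
      abel
    · exact ⟨-s, fun w => by simpa [add_eq_zero_iff_eq_neg] using LinearMap.congr_fun hzero w⟩
  refine hev (smul_right_injective _ I_ne_zero ?_)
  simpa [ht, smul_comm t I, eq_neg_iff_add_eq_zero, ← two_smul ℂ] using he v

theorem exists_eq_smul (hι : Odd (Fintype.card ι)) (d : Module.End S (ι → ℂ)) :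
    ∃ c : ℂ, ∀ v, d v = c • v := by
  let J : Module.End S (ι → ℂ) := I • 1
  have hJ : ∀ v, J v = I • v := fun v => rfl
  obtain ⟨c, hc⟩ := exists_eq_smul_of_map_I_smul (d - J * d * J) fun v => by
    simp only [LinearMap.sub_apply, Module.End.mul_apply, hJ, smul_smul, I_mul_I, neg_one_smul,
      map_neg, smul_sub]
    abel
  have h0 := eq_zero_of_map_I_smul_eq_neg hι (d + J * d * J) fun v => by
    simp only [LinearMap.add_apply, Module.End.mul_apply, hJ, smul_smul, I_mul_I, neg_one_smul,
      map_neg, smul_add]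
    abel
  have h2d : ∀ v, (2 : ℂ) • d v = c • v := fun v => by
    rw [← hc, eq_neg_of_add_eq_zero_right h0, sub_neg_eq_add, LinearMap.add_apply, two_smul]
  refine ⟨c / 2, fun v => ?_⟩
  rw [div_eq_inv_mul, mul_smul, ← h2d, smul_smul, inv_mul_cancel₀ two_ne_zero, one_smul]

theorem eq_top_of_isSimpleModule (hι : Odd (Fintype.card ι)) : S = ⊤ := by
  classical
  refine eq_top_iff.mpr fun m _ => ?_
  let f : Module.End (Module.End S (ι → ℂ)) (ι → ℂ) :=
    { toFun := (m *ᵥ ·)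
      map_add' := mulVec_add m
      map_smul' := fun d v => by
        obtain ⟨c, hc⟩ := exists_eq_smul hι d
        simp [Module.End.smul_def, hc, mulVec_smul] }
  obtain ⟨r, hr⟩ := jacobson_density f (Finset.univ.image fun j => Pi.single j 1)
  have hmr : m = r := ext_of_mulVec_single fun j =>
    hr _ (Finset.mem_image_of_mem _ (Finset.mem_univ j))
  exact hmr ▸ r.2

end Subalgebra

theorem Algebra.adjoin_toSubmodule_eq_span_of_mul_mem {A : Type*} [Semiring A] [Algebra ℝ A]
    {G : Set A} (hone : 1 ∈ G) (hmul : ∀ g ∈ G, ∀ h ∈ G, g * h ∈ G) :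
    Subalgebra.toSubmodule (adjoin ℝ G) = Submodule.span ℝ G := by
  refine adjoin_eq_span_of_subset ℝ fun x hx => Submodule.subset_span ?_
  induction hx using Submonoid.closure_induction with
  | mem x hx => exact hx
  | one => exact hone
  | mul x y _ _ hx hy => exact hmul x hx y hy

theorem isSimpleModule_adjoin {ι : Type*} [Fintype ι] [DecidableEq ι] [Nonempty ι]
    {G : Set (Matrix ι ι ℂ)}
    (hirr : ∀ W : Submodule ℝ (ι → ℂ), (∀ g ∈ G, ∀ w ∈ W, g *ᵥ w ∈ W) → W = ⊥ ∨ W = ⊤) :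
    IsSimpleModule (Algebra.adjoin ℝ G) (ι → ℂ) where
  eq_bot_or_eq_top N := by
    refine (hirr (N.restrictScalars ℝ) fun g hg w hw => ?_).imp
      (Submodule.restrictScalars_eq_bot_iff ℝ _ _).mp (Submodule.restrictScalars_eq_top_iff ℝ _ _).mp
    exact N.smul_mem (⟨g, Algebra.subset_adjoin hg⟩ : Algebra.adjoin ℝ G) hw

theorem statement_10_general (G : Set (Matrix (Fin 3) (Fin 3) ℂ))
    (hone : (1 : Matrix (Fin 3) (Fin 3) ℂ) ∈ G)
    (hmul : ∀ g ∈ G, ∀ h ∈ G, g * h ∈ G)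
    (hirr : ∀ W : Submodule ℝ (Fin 3 → ℂ), StableR G W → W = ⊥ ∨ W = ⊤) :
    Submodule.span ℝ G = (⊤ : Submodule ℝ (Matrix (Fin 3) (Fin 3) ℂ)) := by
  have := isSimpleModule_adjoin hirr
  rw [← Algebra.adjoin_toSubmodule_eq_span_of_mul_mem hone hmul,
    (Algebra.adjoin ℝ G).eq_top_of_isSimpleModule (by decide), Algebra.top_toSubmodule]

theorem statement_10 (G : Set (Matrix (Fin 3) (Fin 3) ℂ))
    (hGL : ∀ g ∈ G, IsUnit g)
    (hone : (1 : Matrix (Fin 3) (Fin 3) ℂ) ∈ G)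
    (hmul : ∀ g ∈ G, ∀ h ∈ G, g * h ∈ G)
    (hinv : ∀ g ∈ G, g⁻¹ ∈ G)
    (hirr : ∀ W : Submodule ℝ (Fin 3 → ℂ), StableR G W → W = ⊥ ∨ W = ⊤) :
    Submodule.span ℝ G = (⊤ : Submodule ℝ (Matrix (Fin 3) (Fin 3) ℂ)) :=
  statement_10_general G hone hmul hirr
end

section
/- Let G be a subgroup of GL(3,ℂ) such that tr g ∈ ℝ for every g ∈ G. Then there exists a G-stable real subspace W of ℂ³ (viewed as a 6-dimensional real vector space) with 0 ≠ W ≠ ℂ³. -/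
open Matrix Polynomial

/-!
If `ℂ³` has no proper nonzero `G`-stable real subspace, it is in particular an irreducible complex
representation, so by Burnside's theorem `G` spans all `3 × 3` matrices. Since `tr (g h)` is real for
`g, h ∈ G`, trace duality shows that `∑ cᵢ gᵢ = 0` forces `∑ cᵢ ḡᵢ = 0`; hence `g ↦ ḡ` extends to a
`ℂ`-algebra endomorphism of the matrix algebra, which is inner: `ḡ s = s g` for an invertible `s`.
Schur's lemma makes `s̄ s` a scalar, which is real, and positive because
`det (s̄ s) = |det s|²` and the dimension is odd. After rescaling, `s̄ s = 1`, and then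
`v ↦ conj (s v)` is an antilinear involution commuting with `G`, whose fixed vectors form a
`G`-stable real subspace that is neither `0` nor `ℂ³`.
-/

open ComplexConjugate

theorem exists_ne_bot_ne_top_of_not_isSimpleModule {R M : Type*} [Ring R] [AddCommGroup M]
    [Module R M] [Nontrivial M] (h : ¬IsSimpleModule R M) :
    ∃ p : Submodule R M, p ≠ ⊥ ∧ p ≠ ⊤ := by
  by_contra! hp
  exact h { eq_bot_or_eq_top := fun p => or_iff_not_imp_left.mpr (hp p) }

theorem Submonoid.span_eq_top_of_adjoin_eq_top {R A : Type*} [CommSemiring R] [Semiring A]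
    [Algebra R A] (G : Submonoid A) (h : Algebra.adjoin R (G : Set A) = ⊤) :
    Submodule.span R (G : Set A) = ⊤ := by
  rw [← Submonoid.closure_eq G, ← Algebra.adjoin_eq_span, h, Algebra.top_toSubmodule]

section MatrixAlgebra

variable {n K : Type*} [Fintype n] [DecidableEq n] [Field K]

/-- Burnside's theorem: Schur's lemma identifies the commutant with the scalars, and the
Jacobson density theorem then realises every matrix by an element of `A`. -/
theorem Subalgebra.eq_top_of_isSimpleModule_s11 [IsAlgClosed K] (A : Subalgebra K (Matrix n n K))
    [IsSimpleModule A (n → K)] : A = ⊤ := by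
  classical
  have schur := IsSimpleModule.algebraMap_end_bijective_of_isAlgClosed K (A := A) (V := n → K)
  refine eq_top_iff.mpr fun x _ => ?_
  let f : Module.End (Module.End A (n → K)) (n → K) :=
    { toFun := fun v => x *ᵥ v
      map_add' := mulVec_add x
      map_smul' := fun φ v => by
        obtain ⟨c, rfl⟩ := schur.2 φ
        simp [mulVec_smul] }
  obtain ⟨r, hr⟩ := jacobson_density f (Finset.univ.image fun j => Pi.single j 1)
  have : x = r := by
    ext i j
    simpa [f, mulVec_single_one, Subalgebra.smul_def] using
      congrFun (hr (Pi.single j 1) (by simp)) i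
  exact this ▸ r.2

theorem Matrix.eq_zero_of_trace_mul_eq_zero {S : Set (Matrix n n K)}
    (hS : Submodule.span K S = ⊤) {x : Matrix n n K} (hx : ∀ h ∈ S, (x * h).trace = 0) :
    x = 0 := by
  have h0 : traceLinearMap n K K ∘ₗ LinearMap.mulLeft K x = 0 := LinearMap.ext_on hS hx
  ext i j
  simpa [trace_mul_single] using LinearMap.congr_fun h0 (single j i 1)

section Intertwiner

variable {A : Type*} [Ring A] [Algebra K A] (f g : Matrix n n K →ₐ[K] A) (i₀ : n) (X : A)

def Matrix.intertwiner : A := ∑ i, f (single i i₀ 1) * X * g (single i₀ i 1)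

theorem Matrix.map_single_mul_intertwiner (p q : n) :
    f (single p q 1) * intertwiner f g i₀ X = f (single p i₀ 1) * X * g (single i₀ q 1) := by
  rw [intertwiner, Finset.mul_sum, Finset.sum_eq_single q]
  · rw [← mul_assoc, ← mul_assoc, ← map_mul, single_mul_single_same, mul_one]
  · intro i _ hi
    rw [← mul_assoc, ← mul_assoc, ← map_mul, single_mul_single_of_ne (h := Ne.symm hi), map_zero,
      zero_mul, zero_mul]
  · simp

theorem Matrix.intertwiner_mul_map_single (p q : n) :
    intertwiner f g i₀ X * g (single p q 1) = f (single p i₀ 1) * X * g (single i₀ q 1) := by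
  rw [intertwiner, Finset.sum_mul, Finset.sum_eq_single p]
  · rw [mul_assoc, ← map_mul, single_mul_single_same, mul_one]
  · intro i _ hi
    rw [mul_assoc, ← map_mul, single_mul_single_of_ne (h := hi), map_zero, mul_zero]
  · simp

theorem Matrix.map_mul_intertwiner (x : Matrix n n K) :
    f x * intertwiner f g i₀ X = intertwiner f g i₀ X * g x := by
  induction x using Matrix.induction_on' with
  | h_zero => simp
  | h_add x y hx hy => rw [map_add, map_add, add_mul, mul_add, hx, hy]
  | h_std_basis p q c =>
    rw [show single p q c = c • single p q 1 by rw [smul_single, smul_eq_mul, mul_one],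
      map_smul, map_smul, smul_mul_assoc, mul_smul_comm, map_single_mul_intertwiner,
      intertwiner_mul_map_single]

end Intertwiner

theorem Matrix.isUnit_of_forall_mul_eq_mul (θ : Matrix n n K → Matrix n n K) {s : Matrix n n K}
    (hs : s ≠ 0) (h : ∀ x, θ x * s = s * x) : IsUnit s := by
  refine mulVec_injective_iff_isUnit.mp <|
    (injective_iff_map_eq_zero s.mulVecLin).mpr fun u hu => ?_
  by_contra hne
  obtain ⟨i, hi⟩ := Function.ne_iff.mp hne
  refine hs (ext fun k j => ?_)
  have key : s *ᵥ (single j i 1 *ᵥ u) = 0 := by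
    rw [mulVec_mulVec, ← h, ← mulVec_mulVec, show s *ᵥ u = 0 from hu, mulVec_zero]
  have := congrFun key k
  rw [single_mulVec, one_mul] at this
  change (s *ᵥ Pi.single j (u i)) k = 0 at this
  rw [mulVec_single] at this
  simpa using (mul_eq_zero.mp this).resolve_right hi

/-- Skolem–Noether for the matrix algebra; `s` is assembled from the matrix units. -/
theorem Matrix.exists_isUnit_forall_algHom_mul_eq_mul [Nonempty n]
    (θ : Matrix n n K →ₐ[K] Matrix n n K) :
    ∃ s : Matrix n n K, IsUnit s ∧ ∀ x, θ x * s = s * x := by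
  let i₀ := Classical.arbitrary n
  have hP : θ (single i₀ i₀ 1) ≠ 0 := (map_ne_zero_iff θ θ.toRingHom.injective).mpr
    fun h => one_ne_zero (α := K) (by simpa using congrFun (congrFun h i₀) i₀)
  obtain ⟨b, j, hbj⟩ : ∃ b j, θ (single i₀ i₀ 1) b j ≠ 0 := by
    by_contra! h
    exact hP (ext h)
  let s := intertwiner θ (AlgHom.id K _) i₀ (single j i₀ 1)
  have hs : ∀ x, θ x * s = s * x := map_mul_intertwiner θ (AlgHom.id K _) i₀ _
  refine ⟨s, isUnit_of_forall_mul_eq_mul θ (fun hs0 => hbj ?_) hs, hs⟩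
  have := map_single_mul_intertwiner θ (AlgHom.id K _) i₀ (single j i₀ 1) i₀ i₀
  rw [show intertwiner _ _ _ _ = s from rfl, hs0, mul_zero, AlgHom.id_apply, mul_assoc,
    single_mul_single_same, one_mul] at this
  simpa using (congrFun (congrFun this b) i₀).symm

end MatrixAlgebra

section RealForm

variable {n : Type*} [Fintype n]

theorem Matrix.map_conj_mulVec_star (M : Matrix n n ℂ) (v : n → ℂ) :
    M.map conj *ᵥ star v = star (M *ᵥ v) := by
  funext i
  simp [mulVec, dotProduct]

def Matrix.realForm (s : Matrix n n ℂ) : Submodule ℝ (n → ℂ) where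
  carrier := {v | s *ᵥ v = star v}
  add_mem' {v w} hv hw := by simp_all [mulVec_add]
  zero_mem' := by simp
  smul_mem' r v hv := by simp_all [mulVec_smul]

theorem Matrix.mem_realForm {s : Matrix n n ℂ} {v : n → ℂ} :
    v ∈ realForm s ↔ s *ᵥ v = star v :=
  Iff.rfl

theorem Matrix.mulVec_mem_realForm {s g : Matrix n n ℂ} (hg : g.map conj * s = s * g)
    {v : n → ℂ} (hv : v ∈ realForm s) : g *ᵥ v ∈ realForm s := by
  rw [mem_realForm] at hv ⊢
  rw [mulVec_mulVec, ← hg, ← mulVec_mulVec, hv, map_conj_mulVec_star]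

theorem Matrix.realForm_ne_top [Nonempty n] (s : Matrix n n ℂ) : realForm s ≠ ⊤ := by
  intro htop
  have h1 : (fun _ => 1 : n → ℂ) ∈ realForm s := htop ▸ Submodule.mem_top
  have hI : (Complex.I • fun _ => 1 : n → ℂ) ∈ realForm s := htop ▸ Submodule.mem_top
  rw [mem_realForm, mulVec_smul, h1] at hI
  norm_num [funext_iff, Complex.ext_iff] at hI

variable [DecidableEq n]

theorem Matrix.add_star_mulVec_mem_realForm {s : Matrix n n ℂ} (hs : s.map conj * s = 1)
    (v : n → ℂ) : v + star (s *ᵥ v) ∈ realForm s := by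
  have : s *ᵥ star (s *ᵥ v) = star v := by
    rw [← star_star (s *ᵥ star _), ← map_conj_mulVec_star, star_star, mulVec_mulVec, hs,
      one_mulVec]
  rw [mem_realForm, mulVec_add, this, star_add, star_star, add_comm]

theorem Matrix.realForm_ne_bot [Nonempty n] {s : Matrix n n ℂ} (hs : s.map conj * s = 1) :
    realForm s ≠ ⊥ := by
  intro hbot
  let v : n → ℂ := fun _ => 1
  have h1 := (Submodule.mem_bot ℝ).mp (hbot ▸ add_star_mulVec_mem_realForm hs v)
  have h2 := (Submodule.mem_bot ℝ).mp (hbot ▸ add_star_mulVec_mem_realForm hs (Complex.I • v))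
  rw [mulVec_smul, star_smul] at h2
  have h1' := congrFun h1 (Classical.arbitrary n)
  have h2' := congrFun h2 (Classical.arbitrary n)
  simp only [Pi.add_apply, Pi.smul_apply, smul_eq_mul, Pi.zero_apply, Complex.star_def,
    Complex.conj_I, v] at h1' h2'
  have : (2 : ℂ) * Complex.I = 0 := by linear_combination Complex.I * h1' + h2'
  simp at this

end RealForm

section RealTraces

variable {n : Type*} [Fintype n] [DecidableEq n]

theorem Matrix.exists_algHom_eq_map_conj (G : Submonoid (Matrix n n ℂ))
    (hG : Submodule.span ℂ (G : Set (Matrix n n ℂ)) = ⊤)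
    (hTr : ∀ g ∈ G, conj g.trace = g.trace) :
    ∃ θ : Matrix n n ℂ →ₐ[ℂ] Matrix n n ℂ, ∀ g ∈ G, θ g = g.map conj := by
  let L₁ := Finsupp.linearCombination ℂ fun g : G => (g : Matrix n n ℂ)
  let L₂ := Finsupp.linearCombination ℂ fun g : G => (g : Matrix n n ℂ).map conj
  have htrace : ∀ c, ∀ h ∈ G, ((L₂ c).map conj * h).trace = conj (L₁ c * h).trace := by
    intro c h hh
    induction c using Finsupp.induction_linear with
    | zero => simp
    | add c d hc hd => simp [Matrix.map_add, add_mul, hc, hd]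
    | single g a =>
      simp only [L₁, L₂, Finsupp.linearCombination_single, smul_mul_assoc, trace_smul,
        smul_eq_mul, map_mul]
      rw [← hTr _ (G.mul_mem g.2 hh)]
      simp [Matrix.map_smul' _ _ _ (map_mul conj), Function.comp_def]
  have hker : ∀ c, L₁ c = 0 → L₂ c = 0 := by
    intro c hc
    have : (L₂ c).map conj = 0 :=
      eq_zero_of_trace_mul_eq_zero hG fun h hh => by simp [htrace c h hh, hc]
    simpa [Function.comp_def] using congrArg (Matrix.map · conj) this
  obtain ⟨σ, hσ⟩ := L₁.exists_rightInverse_of_surjective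
    (by rw [Finsupp.range_linearCombination, Subtype.range_coe_subtype]; exact hG)
  let θ := L₂ ∘ₗ σ
  have hθ : ∀ c, θ (L₁ c) = L₂ c := fun c => by
    show L₂ (σ (L₁ c)) = L₂ c
    rw [← sub_eq_zero, ← map_sub L₂]
    exact hker _ (by rw [map_sub, ← LinearMap.comp_apply, hσ]; simp)
  have hθG : ∀ g ∈ G, θ g = g.map conj := fun g hg => by
    simpa [L₁, L₂] using hθ (Finsupp.single ⟨g, hg⟩ 1)
  have hθmul : ∀ x y, θ (x * y) = θ x * θ y := by
    have : (LinearMap.mul ℂ _).compr₂ θ = (LinearMap.mul ℂ _).compl₁₂ θ θ :=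
      LinearMap.ext_on hG fun g hg => LinearMap.ext_on hG fun h hh => by
        simp [hθG _ (G.mul_mem hg hh), hθG g hg, hθG h hh, Matrix.map_mul]
    exact fun x y => LinearMap.congr_fun₂ this x y
  exact ⟨AlgHom.ofLinearMap θ (by simpa using hθG 1 G.one_mem) hθmul, hθG⟩

theorem Matrix.exists_real_map_conj_mul_self_eq_scalar {G : Set (Matrix n n ℂ)}
    (hG : Algebra.adjoin ℂ G = ⊤) {s : Matrix n n ℂ} (hs : s ≠ 0)
    (hsG : ∀ g ∈ G, g.map conj * s = s * g) :
    ∃ r : ℝ, s.map conj * s = scalar n (r : ℂ) := by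
  have hcG : ∀ g ∈ G, g * (s.map conj * s) = s.map conj * s * g := fun g hg => by
    have : s.map conj * g.map conj = g * s.map conj := by
      simpa [Function.comp_def] using congrArg (·.map conj) (hsG g hg).symm
    rw [← mul_assoc, ← this, mul_assoc, hsG g hg, mul_assoc]
  have hcomm : ∀ x, Commute x (s.map conj * s) := fun x => by
    have : Algebra.adjoin ℂ G ≤ Subalgebra.centralizer ℂ {s.map conj * s} :=
      Algebra.adjoin_le fun g hg =>
        (Subalgebra.mem_centralizer_iff ℂ).mpr fun _ h => h ▸ (hcG g hg).symm
    exact ((Subalgebra.mem_centralizer_iff ℂ).mp (this (hG ▸ Algebra.mem_top)) _ rfl).symm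
  obtain ⟨μ, hμ⟩ := mem_range_scalar_of_commute_single fun i j _ => hcomm (single i j 1)
  -- conjugating `s̄ s = μ` gives `s s̄ = μ̄`, hence `μ̄ s = s s̄ s = s μ`
  have hμs : conj μ • s = μ • s := by
    have h := congrArg (·.map conj * s) hμ
    simp only [Matrix.map_mul, Matrix.map_map, Function.comp_def, Complex.conj_conj,
      map_id'] at h
    rwa [mul_assoc, ← hμ, scalar_apply, diagonal_map (map_zero _), ← smul_eq_diagonal_mul,
      ← smul_eq_mul_diagonal] at h
  obtain ⟨r, rfl⟩ := Complex.conj_eq_iff_real.mp (smul_left_injective ℂ hs hμs)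
  exact ⟨r, hμ.symm⟩

theorem Matrix.exists_map_conj_mul_self_eq_one (hn : Odd (Fintype.card n))
    {G : Set (Matrix n n ℂ)} (hG : Algebra.adjoin ℂ G = ⊤) {s : Matrix n n ℂ} (hs : IsUnit s)
    (hsG : ∀ g ∈ G, g.map conj * s = s * g) :
    ∃ t : Matrix n n ℂ, t.map conj * t = 1 ∧ ∀ g ∈ G, g.map conj * t = t * g := by
  have : Nonempty n := Fintype.card_pos_iff.mp hn.pos
  obtain ⟨r, hr⟩ := exists_real_map_conj_mul_self_eq_scalar hG hs.ne_zero hsG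
  have hdet : ((r ^ Fintype.card n : ℝ) : ℂ) = (Complex.normSq s.det : ℂ) := by
    have := congrArg det hr
    rw [det_mul, ← RingHom.mapMatrix_apply, ← RingHom.map_det, mul_comm, Complex.mul_conj,
      scalar_apply, det_diagonal] at this
    push_cast
    simpa using this.symm
  have hr0 : 0 < r := hn.pow_pos_iff.mp <| (Complex.ofReal_inj.mp hdet) ▸
    Complex.normSq_pos.mpr ((isUnit_iff_isUnit_det s).mp hs).ne_zero
  refine ⟨(√r)⁻¹ • s, ?_, fun g hg => by rw [mul_smul_comm, smul_mul_assoc, hsG g hg]⟩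
  rw [Matrix.map_smul _ _ (fun z => by simp), smul_mul_smul_comm, hr, ← mul_inv,
    Real.mul_self_sqrt hr0.le, scalar_apply, ← diagonal_smul]
  ext i j
  rcases eq_or_ne i j with rfl | h
  · simp [Complex.ext_iff, hr0.ne']
  · simp [h]

theorem Submonoid.exists_map_conj_mul_self_eq_one_of_real_trace (G : Submonoid (Matrix n n ℂ))
    (hn : Odd (Fintype.card n))
    [IsSimpleModule (Algebra.adjoin ℂ (G : Set (Matrix n n ℂ))) (n → ℂ)]
    (hTr : ∀ g ∈ G, conj g.trace = g.trace) :
    ∃ s : Matrix n n ℂ, s.map conj * s = 1 ∧ ∀ g ∈ G, g.map conj * s = s * g := by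
  have : Nonempty n := Fintype.card_pos_iff.mp hn.pos
  have hA := Subalgebra.eq_top_of_isSimpleModule_s11 (Algebra.adjoin ℂ (G : Set (Matrix n n ℂ)))
  obtain ⟨θ, hθ⟩ := exists_algHom_eq_map_conj G (G.span_eq_top_of_adjoin_eq_top hA) hTr
  obtain ⟨s, hs, hsθ⟩ := exists_isUnit_forall_algHom_mul_eq_mul θ
  exact exists_map_conj_mul_self_eq_one hn hA hs fun g hg => hθ g hg ▸ hsθ g

end RealTraces

theorem statement_11_general (G : Set (Matrix (Fin 3) (Fin 3) ℂ))
    (hone : (1 : Matrix (Fin 3) (Fin 3) ℂ) ∈ G)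
    (hmul : ∀ g ∈ G, ∀ h ∈ G, g * h ∈ G)
    (hTr : ∀ g ∈ G, ∃ t : ℝ, g.trace = (t : ℂ)) :
    ∃ W : Submodule ℝ (Fin 3 → ℂ), StableR G W ∧ W ≠ ⊥ ∧ W ≠ ⊤ := by
  let M : Submonoid (Matrix (Fin 3) (Fin 3) ℂ) := ⟨⟨G, fun ha hb => hmul _ ha _ hb⟩, hone⟩
  by_cases hsimple : IsSimpleModule (Algebra.adjoin ℂ G) (Fin 3 → ℂ)
  · have hTr' : ∀ g ∈ M, conj g.trace = g.trace := fun g hg => by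
      obtain ⟨t, ht⟩ := hTr g hg
      rw [ht, Complex.conj_ofReal]
    obtain ⟨s, hs, hsG⟩ := M.exists_map_conj_mul_self_eq_one_of_real_trace (by decide) hTr'
    exact ⟨realForm s, fun g hg v hv => mulVec_mem_realForm (hsG g hg) hv, realForm_ne_bot hs,
      realForm_ne_top s⟩
  · obtain ⟨p, hp_bot, hp_top⟩ := exists_ne_bot_ne_top_of_not_isSimpleModule hsimple
    exact ⟨(p.restrictScalars ℂ).restrictScalars ℝ,
      fun g hg v hv => p.smul_mem (⟨g, Algebra.subset_adjoin hg⟩ : Algebra.adjoin ℂ G) hv,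
      by simpa [Submodule.restrictScalars_eq_bot_iff] using hp_bot,
      by simpa [Submodule.restrictScalars_eq_top_iff] using hp_top⟩

theorem statement_11 (G : Set (Matrix (Fin 3) (Fin 3) ℂ))
    (hGL : ∀ g ∈ G, IsUnit g)
    (hone : (1 : Matrix (Fin 3) (Fin 3) ℂ) ∈ G)
    (hmul : ∀ g ∈ G, ∀ h ∈ G, g * h ∈ G)
    (hinv : ∀ g ∈ G, g⁻¹ ∈ G)
    (hTr : ∀ g ∈ G, ∃ t : ℝ, g.trace = (t : ℂ)) :
    ∃ W : Submodule ℝ (Fin 3 → ℂ), StableR G W ∧ W ≠ ⊥ ∧ W ≠ ⊤ :=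
  statement_11_general G hone hmul hTr
end

section
/- Let g ∈ SU(J). Then the characteristic polynomial of g equals X³ − (tr g)·X² + conj(tr g)·X − 1. -/
open Matrix Polynomial

/-! For a `3 × 3` matrix the coefficient of `X` in the characteristic polynomial is the trace of
the adjugate. If `g` preserves the form of an involution `J` and `det g = 1`, its adjugate is
`g⁻¹ = J gᴴ J`, whose trace is `conj (tr g)`. -/

theorem Matrix.charpoly_fin_three {R : Type*} [CommRing R] (M : Matrix (Fin 3) (Fin 3) R) :
    M.charpoly = X ^ 3 - C M.trace * X ^ 2 + C M.adjugate.trace * X - C M.det := by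
  simp only [charpoly, det_fin_three, adjugate_fin_three, trace_fin_three, charmatrix_apply_eq,
    charmatrix_apply_ne, ne_eq, Fin.reduceEq, not_false_eq_true, Fin.isValue, of_apply, cons_val',
    cons_val_zero, cons_val_one, cons_val, cons_val_fin_one, map_add, map_sub, map_mul, mul_neg,
    neg_mul, neg_neg]
  ring

theorem Matrix.trace_conj_of_mul_self_eq_one {n R : Type*} [Fintype n] [DecidableEq n]
    [CommRing R] {J : Matrix n n R} (hJ : J * J = 1) (A : Matrix n n R) :
    (J * A * J).trace = A.trace := by
  rw [trace_mul_comm, ← Matrix.mul_assoc, hJ, Matrix.one_mul]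

theorem Matrix.adjugate_eq_of_conjTranspose_mul_mul_self {n R : Type*} [Fintype n]
    [DecidableEq n] [CommRing R] [StarRing R] {J g : Matrix n n R} (hJ : J * J = 1)
    (hdet : g.det = 1) (hg : gᴴ * J * g = J) : g.adjugate = J * gᴴ * J := by
  have hleft : J * gᴴ * J * g = 1 := by
    rw [Matrix.mul_assoc (J * gᴴ), Matrix.mul_assoc J, ← Matrix.mul_assoc gᴴ, hg, hJ]
  rw [← inv_eq_left_inv hleft, inv_def, hdet, Ring.inverse_one, one_smul]

theorem matJ_mul_self : matJ * matJ = 1 := by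
  rw [matJ, mul_fin_three, one_fin_three]
  norm_num

theorem statement_12 (g : Matrix (Fin 3) (Fin 3) ℂ) (hg : InSUJ g) :
    g.charpoly = X ^ 3 - C g.trace * X ^ 2 + C (star g.trace) * X - 1 := by
  obtain ⟨hdet, hpres⟩ := hg
  rw [charpoly_fin_three, adjugate_eq_of_conjTranspose_mul_mul_self matJ_mul_self hdet hpres,
    trace_conj_of_mul_self_eq_one matJ_mul_self, trace_conjTranspose, hdet, C_1]
end

section
/- Let r be a real number with |r| > 1, let g be the diagonal 3×3 complex matrix diag(1, r⁻¹, r), and let h be a 3×3 complex matrix with det h = 1 whose (2,2)-entry h₂₂ (the bottom-right diagonal entry, indexing rows and columns by 0,1,2) is nonzero. Then there exists N such that for every integer n ≥ N, the matrix gⁿ·h has an eigenvalue of modulus greater than 1. -/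
open Matrix Polynomial

/-! The trace of `gⁿ h` is `h₀₀ + r⁻ⁿ h₁₁ + rⁿ h₂₂`, whose modulus tends to infinity because
`h₂₂ ≠ 0`. The trace is the sum of the three eigenvalues, so once it exceeds `3` in modulus,
one eigenvalue has modulus greater than `1`. -/

open Filter

theorem exists_isRoot_charpoly_one_lt_norm_of_card_lt_norm_trace {n : Type*} [Fintype n]
    [DecidableEq n] (A : Matrix n n ℂ) (hA : (Fintype.card n : ℝ) < ‖A.trace‖) :
    ∃ μ : ℂ, A.charpoly.IsRoot μ ∧ 1 < ‖μ‖ := by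
  by_contra! hsmall
  have hroots : ∀ x ∈ A.charpoly.roots.map (‖·‖), x ≤ 1 := by
    simp only [Multiset.mem_map]
    rintro _ ⟨μ, hμ, rfl⟩
    exact hsmall μ (isRoot_of_mem_roots hμ)
  have hsum := Multiset.sum_le_card_nsmul _ _ hroots
  rw [Multiset.card_map, IsAlgClosed.card_roots_eq_natDegree, charpoly_natDegree_eq_dim,
    nsmul_one] at hsum
  exact hA.not_ge <| A.trace_eq_sum_roots_charpoly ▸ (norm_multiset_sum_le _).trans hsum

theorem tendsto_norm_add_pow_mul_atTop {z : ℂ} (hz : 1 < ‖z‖) (a b c : ℂ) (hc : c ≠ 0) :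
    Tendsto (fun m : ℕ => ‖a + z⁻¹ ^ m * b + z ^ m * c‖) atTop atTop := by
  have hbig : Tendsto (fun m : ℕ => ‖z‖ ^ m * ‖c‖ - (‖a‖ + ‖b‖)) atTop atTop :=
    tendsto_atTop_add_const_right _ _ <|
      (tendsto_pow_atTop_atTop_of_one_lt hz).atTop_mul_const (norm_pos_iff.2 hc)
  refine tendsto_atTop_mono (fun m => ?_) hbig
  have hsmall : ‖z⁻¹ ^ m * b‖ ≤ ‖b‖ := by
    rw [norm_mul, norm_pow, norm_inv]
    exact mul_le_of_le_one_left (norm_nonneg b)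
      (pow_le_one₀ (by positivity) (inv_le_one_of_one_le₀ hz.le))
  have hrev := norm_sub_le (a + z⁻¹ ^ m * b + z ^ m * c) (a + z⁻¹ ^ m * b)
  rw [add_sub_cancel_left, norm_mul, norm_pow] at hrev
  linarith [norm_add_le a (z⁻¹ ^ m * b)]

theorem trace_diagonal_pow_mul {n : Type*} [Fintype n] [DecidableEq n] {R : Type*}
    [CommSemiring R] (d : n → R) (m : ℕ) (A : Matrix n n R) :
    (diagonal d ^ m * A).trace = ∑ i, d i ^ m * A i i := by
  simp [diagonal_pow, trace, diagonal_mul]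

theorem statement_15_general (r : ℝ) (hr : 1 < |r|)
    (g : Matrix (Fin 3) (Fin 3) ℂ)
    (hg : g = Matrix.diagonal ![1, ((r : ℂ))⁻¹, (r : ℂ)])
    (h : Matrix (Fin 3) (Fin 3) ℂ) (h22 : h 2 2 ≠ 0) :
    ∃ N : ℤ, ∀ n : ℤ, N ≤ n →
      ∃ μ : ℂ, (g ^ n * h).charpoly.IsRoot μ ∧ 1 < ‖μ‖ := by
  have htrace (m : ℕ) : (g ^ (m : ℤ) * h).trace
      = h 0 0 + (r : ℂ)⁻¹ ^ m * h 1 1 + (r : ℂ) ^ m * h 2 2 := by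
    simp [hg, trace_diagonal_pow_mul, Fin.sum_univ_three]
  have hgrowth :=
    tendsto_norm_add_pow_mul_atTop (z := r) (by simpa using hr) (h 0 0) (h 1 1) _ h22
  obtain ⟨N, hN⟩ := eventually_atTop.1 (hgrowth.eventually_gt_atTop 3)
  refine ⟨N, fun n hn => ?_⟩
  lift n to ℕ using (Int.natCast_nonneg N).trans hn
  refine exists_isRoot_charpoly_one_lt_norm_of_card_lt_norm_trace _ ?_
  rw [htrace]
  exact_mod_cast hN n (mod_cast hn)

theorem statement_15 (r : ℝ) (hr : 1 < |r|)
    (g : Matrix (Fin 3) (Fin 3) ℂ)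
    (hg : g = Matrix.diagonal ![1, ((r : ℂ))⁻¹, (r : ℂ)])
    (h : Matrix (Fin 3) (Fin 3) ℂ) (hdet : h.det = 1) (h22 : h 2 2 ≠ 0) :
    ∃ N : ℤ, ∀ n : ℤ, N ≤ n →
      ∃ μ : ℂ, (g ^ n * h).charpoly.IsRoot μ ∧ 1 < ‖μ‖ :=
  statement_15_general r hr g hg h h22
end

section
/- Let h ∈ SU(J) satisfy h₁₁ = 0 and h₂₂ = 0 (the two diagonal entries in positions (1,1) and (2,2), indexing rows and columns by 0,1,2). Then there exist a real number a > 0 and ε ∈ ℂ with |ε| = 1 such that h is the matrix with rows (−ε⁻², 0, 0), (0, 0, a·ε), (0, a⁻¹·ε, 0). -/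
open Matrix Polynomial

/-! The relation `hᴴ J h = J` says that the columns `c₀, c₁, c₂` of `h` satisfy
`⟨cⱼ, cᵢ⟩ = Jᵢⱼ`. Since `h₁₁ = 0`, `⟨c₁, c₁⟩ = |h₀₁|²`, so `c₁` being isotropic gives `h₀₁ = 0`;
likewise `h₀₂ = 0`. Then `⟨c₂, c₁⟩ = h₁₂ conj h₂₁ = 1`, and orthogonality of `c₁, c₂` to `c₀`
kills `h₁₀, h₂₀`, so `h` is block antidiagonal with `det h = -h₀₀ h₁₂ h₂₁ = 1`. Writing
`h₁₂ = a ε` in polar form, `h₂₁ = 1 / conj h₁₂ = a⁻¹ ε` and `h₀₀ = -1 / (h₁₂ h₂₁) = -ε⁻²`. -/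

open ComplexConjugate

theorem conjTranspose_mul_matJ_mul_apply (g : Matrix (Fin 3) (Fin 3) ℂ) (i j : Fin 3) :
    (gᴴ * matJ * g) i j = herm (gᵀ j) (gᵀ i) := by
  simp only [mul_apply, Fin.sum_univ_three, matJ, herm, conjTranspose_apply, transpose_apply,
    RCLike.star_def, of_apply, cons_val', cons_val_zero, cons_val_one, cons_val, cons_val_fin_one,
    mul_one, mul_zero, add_zero, zero_add]
  ring

theorem InSUJ.herm_col_col {g : Matrix (Fin 3) (Fin 3) ℂ} (hg : InSUJ g) (i j : Fin 3) :
    herm (gᵀ j) (gᵀ i) = matJ i j := by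
  rw [← conjTranspose_mul_matJ_mul_apply, hg.2]

theorem InSUJ.eq_antidiag {g : Matrix (Fin 3) (Fin 3) ℂ} (hg : InSUJ g)
    (h11 : g 1 1 = 0) (h22 : g 2 2 = 0) :
    g = !![g 0 0, 0, 0; 0, 0, g 1 2; 0, g 2 1, 0] ∧
      g 1 2 * conj (g 2 1) = 1 ∧ g 0 0 * (g 1 2 * g 2 1) = -1 := by
  have c11 := hg.herm_col_col 1 1
  have c22 := hg.herm_col_col 2 2
  have c12 := hg.herm_col_col 1 2
  have c01 := hg.herm_col_col 0 1
  have c02 := hg.herm_col_col 0 2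
  simp only [herm, matJ, transpose_apply, RCLike.star_def, h11, h22, star_zero, zero_mul, mul_zero,
    add_zero, of_apply, cons_val', cons_val_zero, cons_val_one, cons_val, cons_val_fin_one,
    mul_eq_zero, map_eq_zero, or_self] at c11 c22 c12 c01 c02
  simp only [c11, c22, zero_mul, zero_add] at c12 c01 c02
  have h12 : g 1 2 ≠ 0 := left_ne_zero_of_mul_eq_one c12
  have h21 : g 2 1 ≠ 0 := by simpa using right_ne_zero_of_mul_eq_one c12
  have h10 : g 1 0 = 0 := by simpa [h21] using c01
  have h20 : g 2 0 = 0 := by simpa [h12] using c02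
  refine ⟨?_, c12, ?_⟩
  · rw [eta_fin_three g]
    simp [h10, h11, h20, h22, c11, c22]
  · have hdet := hg.1
    rw [det_fin_three, h10, h11, h20, h22, c11, c22] at hdet
    linear_combination -hdet

theorem exists_polar_of_mul_conj_eq_one {x y z : ℂ} (hxy : x * conj y = 1)
    (hz : z * (x * y) = -1) :
    ∃ (a : ℝ) (ε : ℂ), 0 < a ∧ ‖ε‖ = 1 ∧
      z = -(ε ^ 2)⁻¹ ∧ x = a * ε ∧ y = ((a⁻¹ : ℝ) : ℂ) * ε := by
  have hx : x ≠ 0 := left_ne_zero_of_mul_eq_one hxy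
  have ha : 0 < ‖x‖ := norm_pos_iff.mpr hx
  have ha' : (‖x‖ : ℂ) ≠ 0 := by exact_mod_cast ha.ne'
  have hy : y = x / (‖x‖ : ℂ) ^ 2 := by
    have hyx : conj x * y = 1 := by simpa using congrArg conj hxy
    rw [← Complex.mul_conj' x, eq_div_iff (by simpa using hx)]
    linear_combination x * hyx
  refine ⟨‖x‖, x / ‖x‖, ha, by simp [ha.ne'], ?_, by field_simp, by rw [hy]; push_cast; ring⟩
  rw [hy] at hz
  field_simp at hz ⊢
  linear_combination hz

theorem statement_16 (h : Matrix (Fin 3) (Fin 3) ℂ) (hh : InSUJ h)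
    (h11 : h 1 1 = 0) (h22 : h 2 2 = 0) :
    ∃ (a : ℝ) (ε : ℂ), 0 < a ∧ ‖ε‖ = 1 ∧
      h = !![-(ε ^ 2)⁻¹, 0, 0; 0, 0, (a : ℂ) * ε; 0, ((a⁻¹ : ℝ) : ℂ) * ε, 0] := by
  obtain ⟨hshape, hconj, hdet⟩ := hh.eq_antidiag h11 h22
  obtain ⟨a, ε, ha, hε, h00, h12, h21⟩ := exists_polar_of_mul_conj_eq_one hconj hdet
  exact ⟨a, ε, ha, hε, by rw [hshape, h00, h12, h21]⟩
end

section
/- Let c ∈ ℂ with c ∉ ℝ, and let e₀, e₁, e₂ ∈ ℂ³ be vectors whose Gram matrix with respect to ⟨-,-⟩ has rows (1,0,0), (0,0,c), (0, conj(c), 0), i.e. ⟨e₀,e₀⟩ = 1, ⟨e₁,e₂⟩ = c, ⟨e₂,e₁⟩ = conj(c), and all other pairings among e₀,e₁,e₂ vanish. Let W := ℝ·e₀ + ℝ·e₁ + ℝ·e₂ be their real span. Then for w ∈ W, one has Im⟨w', w⟩ = 0 for all w' ∈ W if and only if w ∈ ℝ·e₀. -/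
open Matrix Polynomial

/-! `ω(x, y) := Im ⟨x, y⟩` is an alternating real bilinear form, since `⟨x, x⟩` is real.
As `e₀` is orthogonal to `e₁` and `e₂`, on `W` it reads
`ω(a'e₀ + b'e₁ + d'e₂, ae₀ + be₁ + de₂) = (b'd - d'b) Im c`,
which vanishes for all `b', d'` iff `b = d = 0`, because `Im c ≠ 0`. -/

namespace LinearMap.IsAlt

variable {R M N : Type*} [CommRing R] [AddCommGroup M] [Module R M] [AddCommGroup N] [Module R N]
  {B : M →ₗ[R] M →ₗ[R] N}

theorem apply_lincomb_of_orthogonal (hB : B.IsAlt) {e₀ e₁ e₂ : M} (h₀₁ : B e₀ e₁ = 0)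
    (h₀₂ : B e₀ e₂ = 0) (a b d a' b' d' : R) :
    B (a' • e₀ + b' • e₁ + d' • e₂) (a • e₀ + b • e₁ + d • e₂) = (b' * d - d' * b) • B e₁ e₂ := by
  have h₁₀ : B e₁ e₀ = 0 := hB.eq_iff.mp h₀₁
  have h₂₀ : B e₂ e₀ = 0 := hB.eq_iff.mp h₀₂
  have h₂₁ : B e₂ e₁ = -B e₁ e₂ := (hB.neg e₁ e₂).symm
  simp only [map_add, map_smul, LinearMap.add_apply, LinearMap.smul_apply, hB.self_eq_zero,
    h₀₁, h₀₂, h₁₀, h₂₀, h₂₁, smul_zero, add_zero, zero_add, smul_neg]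
  module

end LinearMap.IsAlt

theorem star_herm (x y : Fin 3 → ℂ) : star (herm x y) = herm y x := by
  simp only [herm, star_add, star_mul', star_star]
  ring

theorem im_herm_self (x : Fin 3 → ℂ) : (herm x x).im = 0 :=
  Complex.conj_eq_iff_im.mp (star_herm x x)

theorem herm_add_left (x x' y : Fin 3 → ℂ) : herm (x + x') y = herm x y + herm x' y := by
  simp only [herm, Pi.add_apply]
  ring

theorem herm_add_right (x y y' : Fin 3 → ℂ) : herm x (y + y') = herm x y + herm x y' := by
  simp only [herm, Pi.add_apply, star_add]
  ring

theorem herm_smul_left (r : ℝ) (x y : Fin 3 → ℂ) : herm (r • x) y = r * herm x y := by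
  simp only [herm, Pi.smul_apply, Complex.real_smul]
  ring

theorem herm_smul_right (r : ℝ) (x y : Fin 3 → ℂ) : herm x (r • y) = r * herm x y := by
  simp only [herm, Pi.smul_apply, Complex.real_smul, star_mul', Complex.star_def,
    Complex.conj_ofReal]
  ring

noncomputable def imHerm : (Fin 3 → ℂ) →ₗ[ℝ] (Fin 3 → ℂ) →ₗ[ℝ] ℝ :=
  LinearMap.mk₂ ℝ (fun x y ↦ (herm x y).im)
    (fun x x' y ↦ by rw [herm_add_left, Complex.add_im])
    (fun r x y ↦ by rw [herm_smul_left, Complex.im_ofReal_mul, smul_eq_mul])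
    (fun x y y' ↦ by rw [herm_add_right, Complex.add_im])
    (fun r x y ↦ by rw [herm_smul_right, Complex.im_ofReal_mul, smul_eq_mul])

@[simp]
theorem imHerm_apply (x y : Fin 3 → ℂ) : imHerm x y = (herm x y).im := rfl

theorem imHerm_isAlt : imHerm.IsAlt := im_herm_self

theorem statement_17_general (c : ℂ) (hc : ∀ r : ℝ, c ≠ (r : ℂ))
    (e₀ e₁ e₂ : Fin 3 → ℂ)
    (g01 : herm e₀ e₁ = 0) (g02 : herm e₀ e₂ = 0)
    (g12 : herm e₁ e₂ = c)
    (W : Submodule ℝ (Fin 3 → ℂ))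
    (hW : W = Submodule.span ℝ {e₀, e₁, e₂}) :
    ∀ w ∈ W, ((∀ w' ∈ W, (herm w' w).im = 0) ↔ ∃ r : ℝ, w = r • e₀) := by
  subst hW
  have hc_im : c.im ≠ 0 := fun h ↦ hc c.re (Complex.ext rfl h)
  have h₀₁ : imHerm e₀ e₁ = 0 := by simp [g01]
  have h₀₂ : imHerm e₀ e₂ = 0 := by simp [g02]
  have hω (a b d a' b' d' : ℝ) :
      (herm (a' • e₀ + b' • e₁ + d' • e₂) (a • e₀ + b • e₁ + d • e₂)).im =
        (b' * d - d' * b) * c.im := by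
    simpa only [imHerm_apply, smul_eq_mul, g12] using
      imHerm_isAlt.apply_lincomb_of_orthogonal h₀₁ h₀₂ a b d a' b' d'
  simp only [Submodule.mem_span_triple, forall_exists_index]
  rintro _ a b d rfl
  constructor
  · intro h
    have hd := h _ 0 1 0 rfl
    have hb := h _ 0 0 1 rfl
    rw [hω] at hd hb
    simp only [one_mul, zero_mul, sub_zero, zero_sub, neg_mul, neg_eq_zero, mul_eq_zero, hc_im,
      or_false] at hd hb
    exact ⟨a, by simp [hb, hd]⟩
  · rintro ⟨r, hr⟩ _ a' b' d' rfl
    rw [hr, show r • e₀ = r • e₀ + (0 : ℝ) • e₁ + (0 : ℝ) • e₂ by simp, hω]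
    ring

theorem statement_17 (c : ℂ) (hc : ∀ r : ℝ, c ≠ (r : ℂ))
    (e₀ e₁ e₂ : Fin 3 → ℂ)
    (g00 : herm e₀ e₀ = 1) (g01 : herm e₀ e₁ = 0) (g02 : herm e₀ e₂ = 0)
    (g10 : herm e₁ e₀ = 0) (g11 : herm e₁ e₁ = 0) (g12 : herm e₁ e₂ = c)
    (g20 : herm e₂ e₀ = 0) (g21 : herm e₂ e₁ = star c) (g22 : herm e₂ e₂ = 0)
    (W : Submodule ℝ (Fin 3 → ℂ))
    (hW : W = Submodule.span ℝ {e₀, e₁, e₂}) :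
    ∀ w ∈ W, ((∀ w' ∈ W, (herm w' w).im = 0) ↔ ∃ r : ℝ, w = r • e₀) :=
  statement_17_general c hc e₀ e₁ e₂ g01 g02 g12 W hW
end
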